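/- Let n ≥ 3 and let |C^{n-1}Z⟩ = (1/√{2^n}) ∑_{b∈{0,1}^n} (−1)^{b₁b₂⋯b_n} |b⟩. For bit strings x, z ∈ {0,1}^n, the Pauli expectation satisfies: ⟨C^{n-1}Z| X^x Z^z |C^{n-1}Z⟩ equals 1 if x = z = 0; equals 0 if x = 0 and z ≠ 0; equals 1 − 2^{2−n} if x ≠ 0 and z = 0; and equals (−2(−1)^{z·1} − 2(−1)^{z·(1⊕x)})/2^n if x ≠ 0 and z ≠ 0, where 1 denotes the all-ones string, · the inner product mod 2, and ⊕ bitwise XOR. -/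

import Mathlib

open Complex Matrix

/-- The `n`-qubit state `|C^{n-1}Z⟩` with amplitude `(−1)^{b₁⋯b_n}/√(2^n)` on `|b⟩`. -/
noncomputable def cnzState (n : ℕ) : (Fin n → Bool) → ℂ :=
  fun b => (if ∀ k, b k = true then (-1 : ℂ) else 1) / Real.sqrt (2 ^ n)

/-- The Pauli operator `X^x Z^z = ⊗_k X^{x_k} Z^{z_k}`, with matrix entries
`⟨b'|X^x Z^z|b⟩ = δ_{b', b⊕x} (−1)^{z·b}`. -/
noncomputable def pauliXZ (n : ℕ) (x z : Fin n → Bool) :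
    Matrix (Fin n → Bool) (Fin n → Bool) ℂ :=
  fun b' b => (if b' = fun k => xor (b k) (x k) then 1 else 0) *
    (-1 : ℂ) ^ (Finset.univ.filter (fun k => z k = true ∧ b k = true)).card

/-!
The amplitude sign is `s(b) = 1 - 2[b = 𝟙]`, and `b ⊕ x = 𝟙` iff `b = ¬x`. For `x ≠ 0` the
two indicators never fire together, so `s(b ⊕ x) s(b) = 1 - 2[b = 𝟙] - 2[b = ¬x]`; for `x = 0`
the product is `1`. Summing against the character `(-1)^{z·b}`, the constant term gives `2^n [z = 0]`
(the character sum factors as `∏_k (1 + (-1)^{z_k})`), and the two point masses give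
`-2(-1)^{z·𝟙}` and `-2(-1)^{z·¬x}`.
-/

section Signs

variable {ι R : Type*} [Fintype ι] [CommRing R]

theorem sign_compl_mul_sign {x : ι → Bool} (hx : x ≠ fun _ => false) (b : ι → Bool) :
    (if b = (fun k => !x k) then (-1 : R) else 1) * (if b = (fun _ => true) then -1 else 1) =
      1 - (if b = (fun _ => true) then 2 else 0) - (if b = (fun k => !x k) then 2 else 0) := by
  have hdisj : ¬(b = (fun _ => true) ∧ b = fun k => !x k) := by
    rintro ⟨rfl, hb⟩
    exact hx (funext fun k => by simpa using congrFun hb k)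
  split_ifs <;> first | exact absurd ⟨‹_›, ‹_›⟩ hdisj | ring

variable [DecidableEq ι]

theorem sum_neg_one_pow_card_filter_and (z : ι → Bool) :
    ∑ b : ι → Bool, (-1 : R) ^ (Finset.univ.filter (fun k => z k = true ∧ b k = true)).card =
      if z = (fun _ => false) then 2 ^ Fintype.card ι else 0 := by
  have hprod (b : ι → Bool) :
      (-1 : R) ^ (Finset.univ.filter (fun k => z k = true ∧ b k = true)).card =
        ∏ k, if z k = true ∧ b k = true then -1 else 1 := by
    rw [Finset.prod_ite, Finset.prod_const_one, mul_one, Finset.prod_const]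
  have hfactor (k : ι) :
      (∑ c : Bool, if z k = true ∧ c = true then (-1 : R) else 1) =
        if z k = true then 0 else 2 := by
    cases z k <;> simp [one_add_one_eq_two]
  simp_rw [hprod]
  rw [← Fintype.prod_sum fun k c => if z k = true ∧ c = true then (-1 : R) else 1]
  simp_rw [hfactor]
  split_ifs with hz
  · subst hz; simp
  · obtain ⟨k, hk⟩ : ∃ k, z k = true := by
      by_contra! h
      exact hz (funext fun k => by simpa using h k)
    exact Finset.prod_eq_zero (Finset.mem_univ k) (by simp [hk])

theorem sum_sign_compl_mul_sign_mul_neg_one_pow_of_eq {x : ι → Bool} (hx : x = fun _ => false)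
    (z : ι → Bool) :
    ∑ b : ι → Bool, (if b = (fun k => !x k) then (-1 : R) else 1) *
        (if b = (fun _ => true) then -1 else 1) *
        (-1 : R) ^ (Finset.univ.filter (fun k => z k = true ∧ b k = true)).card =
      if z = (fun _ => false) then 2 ^ Fintype.card ι else 0 := by
  have hsq (b : ι → Bool) :
      (if b = (fun _ => true) then (-1 : R) else 1) *
        (if b = (fun _ => true) then -1 else 1) = 1 := by
    split_ifs <;> ring
  simp only [hx, Bool.not_false, hsq, one_mul, sum_neg_one_pow_card_filter_and]

theorem sum_sign_compl_mul_sign_mul_neg_one_pow_of_ne {x : ι → Bool} (hx : x ≠ fun _ => false)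
    (z : ι → Bool) :
    ∑ b : ι → Bool, (if b = (fun k => !x k) then (-1 : R) else 1) *
        (if b = (fun _ => true) then -1 else 1) *
        (-1 : R) ^ (Finset.univ.filter (fun k => z k = true ∧ b k = true)).card =
      (if z = (fun _ => false) then 2 ^ Fintype.card ι else 0) -
        2 * (-1 : R) ^ (Finset.univ.filter (fun k => z k = true)).card -
        2 * (-1 : R) ^ (Finset.univ.filter (fun k => z k = true ∧ x k = false)).card := by
  simp_rw [sign_compl_mul_sign hx, sub_mul, one_mul, ite_mul, zero_mul, Finset.sum_sub_distrib,
    Finset.sum_ite_eq', Finset.mem_univ, if_true, sum_neg_one_pow_card_filter_and]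
  simp

end Signs

theorem xor_eq_true_iff_eq_not {ι : Type*} (b x : ι → Bool) :
    (∀ k, xor (b k) (x k) = true) ↔ b = fun k => !x k := by
  rw [funext_iff]
  refine forall_congr' fun k => ?_
  cases b k <;> cases x k <;> simp

theorem star_dotProduct_pauliXZ_mulVec (n : ℕ) (x z : Fin n → Bool)
    (ψ : (Fin n → Bool) → ℂ) :
    star ψ ⬝ᵥ (pauliXZ n x z *ᵥ ψ) =
      ∑ b, star (ψ fun k => xor (b k) (x k)) * ψ b *
        (-1 : ℂ) ^ (Finset.univ.filter (fun k => z k = true ∧ b k = true)).card := by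
  simp only [dotProduct, mulVec, pauliXZ, Pi.star_apply, Finset.mul_sum]
  rw [Finset.sum_comm]
  refine Finset.sum_congr rfl fun b _ => ?_
  simp only [ite_mul, one_mul, zero_mul, mul_ite, mul_zero, Finset.sum_ite_eq', Finset.mem_univ,
    if_true]
  ring

theorem star_cnzState_mul_cnzState (n : ℕ) (b' b : Fin n → Bool) :
    star (cnzState n b') * cnzState n b =
      (if ∀ k, b' k = true then (-1 : ℂ) else 1) *
        (if ∀ k, b k = true then -1 else 1) / 2 ^ n := by
  have hsqrt : ((Real.sqrt (2 ^ n) : ℝ) : ℂ) ^ 2 = 2 ^ n := by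
    rw [← ofReal_pow, Real.sq_sqrt (by positivity)]
    push_cast
    rfl
  have hreal : star (if ∀ k, b' k = true then (-1 : ℂ) else 1) =
      if ∀ k, b' k = true then -1 else 1 := by
    split_ifs <;> simp
  rw [cnzState, cnzState, star_div₀, hreal, Complex.star_def, conj_ofReal, ← hsqrt]
  ring

/-- The signs are rephrased as `b = …` because for `Fin n` a condition `∀ k, …` is decided by
`Nat.decidableForallFin`, not by the `Fintype` instance the general lemmas above are stated with. -/
theorem cnz_pauli_expectation_eq_sum (n : ℕ) (x z : Fin n → Bool) :
    star (cnzState n) ⬝ᵥ (pauliXZ n x z *ᵥ cnzState n) =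
      (∑ b : Fin n → Bool, (if b = (fun k => !x k) then (-1 : ℂ) else 1) *
        (if b = (fun _ => true) then -1 else 1) *
        (-1 : ℂ) ^ (Finset.univ.filter (fun k => z k = true ∧ b k = true)).card) / 2 ^ n := by
  simp_rw [star_dotProduct_pauliXZ_mulVec, star_cnzState_mul_cnzState, xor_eq_true_iff_eq_not,
    ← funext_iff, Finset.sum_div]
  exact Finset.sum_congr rfl fun b _ => by ring

theorem cnz_pauli_expectation_general (n : ℕ) (x z : Fin n → Bool)
    (E : ℂ)
    (hE : E = dotProduct (star (cnzState n)) ((pauliXZ n x z).mulVec (cnzState n))) :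
    ((x = fun _ => false) → (z = fun _ => false) → E = 1) ∧
    ((x = fun _ => false) → z ≠ (fun _ => false) → E = 0) ∧
    (x ≠ (fun _ => false) → (z = fun _ => false) → E = 1 - 4 / 2 ^ n) ∧
    (x ≠ (fun _ => false) → z ≠ (fun _ => false) →
      E = (-2 * (-1 : ℂ) ^ (Finset.univ.filter (fun k => z k = true)).card -
            2 * (-1 : ℂ) ^ (Finset.univ.filter (fun k => z k = true ∧ x k = false)).card) /
          2 ^ n) := by
  have h2n : (2 : ℂ) ^ n ≠ 0 := pow_ne_zero _ two_ne_zero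
  rw [cnz_pauli_expectation_eq_sum] at hE
  refine ⟨fun hx hz => ?_, fun hx hz => ?_, fun hx hz => ?_, fun hx hz => ?_⟩
  · rw [hE, sum_sign_compl_mul_sign_mul_neg_one_pow_of_eq hx, if_pos hz, Fintype.card_fin,
      div_self h2n]
  · rw [hE, sum_sign_compl_mul_sign_mul_neg_one_pow_of_eq hx, if_neg hz, zero_div]
  · rw [hE, sum_sign_compl_mul_sign_mul_neg_one_pow_of_ne hx, if_pos hz, Fintype.card_fin]
    subst hz
    simp only [Bool.false_eq_true, false_and, Finset.filter_false, Finset.card_empty, pow_zero]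
    field_simp
    ring
  · rw [hE, sum_sign_compl_mul_sign_mul_neg_one_pow_of_ne hx, if_neg hz, zero_sub, neg_mul]

/-- For `n ≥ 3`, the Pauli expectations of `|C^{n-1}Z⟩` are:
`1` if `x = z = 0`; `0` if `x = 0, z ≠ 0`; `1 − 2^{2−n}` if `x ≠ 0, z = 0`; and
`(−2(−1)^{z·1} − 2(−1)^{z·(1⊕x)})/2^n` if `x ≠ 0, z ≠ 0`. -/
theorem cnz_pauli_expectation (n : ℕ) (hn : 3 ≤ n) (x z : Fin n → Bool)
    (E : ℂ)
    (hE : E = dotProduct (star (cnzState n)) ((pauliXZ n x z).mulVec (cnzState n))) :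
    ((x = fun _ => false) → (z = fun _ => false) → E = 1) ∧
    ((x = fun _ => false) → z ≠ (fun _ => false) → E = 0) ∧
    (x ≠ (fun _ => false) → (z = fun _ => false) → E = 1 - 4 / 2 ^ n) ∧
    (x ≠ (fun _ => false) → z ≠ (fun _ => false) →
      E = (-2 * (-1 : ℂ) ^ (Finset.univ.filter (fun k => z k = true)).card -
            2 * (-1 : ℂ) ^ (Finset.univ.filter (fun k => z k = true ∧ x k = false)).card) /
          2 ^ n) :=
  cnz_pauli_expectation_general n x z E hE
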